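/- In the diagonal-crossing cell configuration, the ratio of the graph lower-bound cost to the true diagonal cost within one cell equals (k−1)/k: if a trajectory crosses a w×w cell diagonally from corner to opposite corner (cost √2·w/V_max), the cheapest corresponding graph edge connects the first sub-segment on one side to the last sub-segment on a perpendicular side, with cost √2·(k−1)·w/(k·V_max). -/

import Mathlib

/-! The distance between a point of the bottom sub-segment and a point of the right sub-segment
is at least the distance between their nearest endpoints `(w/k, 0)` and `(w, (k-1)w/k)`, because
both coordinate gaps are then simultaneously smallest. These endpoints differ by
`(k-1)w/k` in each coordinate, so their distance is `√2·(k-1)w/k`. -/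

open Real Set

lemma EuclideanSpace.norm_sub_eq_sqrt_fin_two (x y : EuclideanSpace ℝ (Fin 2)) :
    ‖x - y‖ = √((x 0 - y 0) ^ 2 + (x 1 - y 1) ^ 2) := by
  simp [EuclideanSpace.norm_eq, Fin.sum_univ_two, sq_abs]

lemma isLeast_norm_sub_horizontal_vertical_segments {p a c q w : ℝ}
    (hpa : p ≤ a) (haw : a ≤ w) (hc : 0 ≤ c) (hcq : c ≤ q) :
    IsLeast {d : ℝ | ∃ x ∈ {x : EuclideanSpace ℝ (Fin 2) | x 1 = 0 ∧ x 0 ∈ Icc p a},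
        ∃ y ∈ {y : EuclideanSpace ℝ (Fin 2) | y 0 = w ∧ y 1 ∈ Icc c q}, d = ‖x - y‖}
      (√((w - a) ^ 2 + c ^ 2)) := by
  constructor
  · refine ⟨!₂[a, 0], ⟨rfl, hpa, le_rfl⟩, !₂[w, c], ⟨rfl, le_rfl, hcq⟩, ?_⟩
    rw [EuclideanSpace.norm_sub_eq_sqrt_fin_two]
    show _ = √((a - w) ^ 2 + (0 - c) ^ 2)
    ring_nf
  · rintro d ⟨x, ⟨hx1, -, hxa⟩, y, ⟨hy0, hcy, -⟩, rfl⟩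
    rw [EuclideanSpace.norm_sub_eq_sqrt_fin_two, hx1, hy0]
    apply sqrt_le_sqrt
    nlinarith

lemma sqrt_sq_add_sq_self {c : ℝ} (hc : 0 ≤ c) : √(c ^ 2 + c ^ 2) = √2 * c := by
  rw [← two_mul, sqrt_mul zero_le_two, sqrt_sq hc]

/-- Diagonal-crossing cell configuration. In the cell [0,w]² with each side
divided into k sub-segments, the entering sub-segment A = [0, w/k]×{0} (containing the
corner (0,0)) and the exiting sub-segment B = {w}×[(k−1)w/k, w] (containing the opposite
corner (w,w)) are at minimum distance √2·w·(k−1)/k; hence the graph edge cost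
(min distance / V_max) relates to the true diagonal cost √2·w/V_max by the ratio (k−1)/k. -/
theorem diagonal_crossing_ratio
    (w Vmax : ℝ) (hw : 0 < w) (hV : 0 < Vmax) (k : ℕ) (hk : 1 ≤ k)
    (A B : Set (EuclideanSpace ℝ (Fin 2)))
    (hA : A = {x | x 1 = 0 ∧ x 0 ∈ Set.Icc 0 (w / k)})
    (hB : B = {x | x 0 = w ∧ x 1 ∈ Set.Icc (((k : ℝ) - 1) * w / k) w}) :
    sInf {d : ℝ | ∃ x ∈ A, ∃ y ∈ B, d = ‖x - y‖} =
      Real.sqrt 2 * (((k : ℝ) - 1) * w / k) ∧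
    (sInf {d : ℝ | ∃ x ∈ A, ∃ y ∈ B, d = ‖x - y‖} / Vmax) /
      (Real.sqrt 2 * w / Vmax) = ((k : ℝ) - 1) / k := by
  have hk1 : (1 : ℝ) ≤ k := by exact_mod_cast hk
  have hk0 : (0 : ℝ) < k := one_pos.trans_le hk1
  have hgap : w - w / k = ((k : ℝ) - 1) * w / k := by field_simp
  have hgap_nonneg : 0 ≤ ((k : ℝ) - 1) * w / k := by
    have := sub_nonneg.2 hk1; positivity
  have hinf : sInf {d : ℝ | ∃ x ∈ A, ∃ y ∈ B, d = ‖x - y‖} =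
      √2 * (((k : ℝ) - 1) * w / k) := by
    subst hA hB
    rw [(isLeast_norm_sub_horizontal_vertical_segments (by positivity)
      (div_le_self hw.le hk1) hgap_nonneg (by rw [← hgap]; linarith [div_pos hw hk0])).csInf_eq,
      hgap, sqrt_sq_add_sq_self hgap_nonneg]
  refine ⟨hinf, ?_⟩
  rw [hinf]
  field_simp
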